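/- Let c > 0, α > 0, v₁ > 0, v₂ > 0, and let w₁ > 0 and w₂ > 0 be weights. Then there exists a constant L > 0 such that for every real number u, w₁·|s(2cv₁) − s(2uv₁)| + w₂·|s(−2αcv₂) − s(2uv₂)| ≥ L. (This is the weighted-mixture form of the paper's R-ECE lower bound: the expected calibration error of temperature scaling over a population supported on both the inlier and outlier regions is bounded away from zero uniformly over all temperatures.) -/
import Mathlib


/-- The logistic sigmoid function. -/
noncomputable def sig (t : ℝ) : ℝ := 1 / (1 + Real.exp (-t))

lemma sig_denom_pos (t : ℝ) : 0 < 1 + Real.exp (-t) := by positivity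

lemma half_lt_sig {t : ℝ} (ht : 0 < t) : 1/2 < sig t := by
  unfold sig
  rw [div_lt_div_iff₀ (by norm_num) (sig_denom_pos t)]
  have : Real.exp (-t) < 1 := Real.exp_lt_one_iff.mpr (by linarith)
  linarith

lemma sig_le_half {t : ℝ} (ht : t ≤ 0) : sig t ≤ 1/2 := by
  unfold sig
  rw [div_le_div_iff₀ (sig_denom_pos t) (by norm_num)]
  have : 1 ≤ Real.exp (-t) := Real.one_le_exp_iff.mpr (by linarith)
  linarith

lemma sig_lt_half {t : ℝ} (ht : t < 0) : sig t < 1/2 := by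
  unfold sig
  rw [div_lt_div_iff₀ (sig_denom_pos t) (by norm_num)]
  have : 1 < Real.exp (-t) := by
    rw [Real.one_lt_exp_iff]; linarith
  linarith

lemma half_le_sig {t : ℝ} (ht : 0 ≤ t) : 1/2 ≤ sig t := by
  unfold sig
  rw [div_le_div_iff₀ (by norm_num) (sig_denom_pos t)]
  have : Real.exp (-t) ≤ 1 := Real.exp_le_one_iff.mpr (by linarith)
  linarith

/-- Weighted-mixture form of the R-ECE lower bound: the expected calibration
error of temperature scaling over a population supported on both the inlier
and outlier regions is bounded away from zero uniformly over all temperatures. -/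
theorem stmt4 (c α v₁ v₂ w₁ w₂ : ℝ) (hc : 0 < c) (hα : 0 < α) (hv₁ : 0 < v₁)
    (hv₂ : 0 < v₂) (hw₁ : 0 < w₁) (hw₂ : 0 < w₂) :
    ∃ L : ℝ, 0 < L ∧ ∀ u : ℝ,
      L ≤ w₁ * |sig (2 * c * v₁) - sig (2 * u * v₁)| +
            w₂ * |sig (-2 * α * c * v₂) - sig (2 * u * v₂)| := by
  have hA : 1/2 < sig (2 * c * v₁) := half_lt_sig (by positivity)
  have hB : sig (-2 * α * c * v₂) < 1/2 := sig_lt_half (by nlinarith [mul_pos (mul_pos hα hc) hv₂])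
  refine ⟨min (w₁ * (sig (2 * c * v₁) - 1/2)) (w₂ * (1/2 - sig (-2 * α * c * v₂))),
    lt_min (by nlinarith) (by nlinarith), fun u => ?_⟩
  rcases le_or_gt u 0 with hu | hu
  · have h1 : sig (2 * u * v₁) ≤ 1/2 := sig_le_half (by nlinarith)
    have habs : sig (2 * c * v₁) - 1/2 ≤ |sig (2 * c * v₁) - sig (2 * u * v₁)| := by
      calc sig (2 * c * v₁) - 1/2 ≤ sig (2 * c * v₁) - sig (2 * u * v₁) := by linarith
        _ ≤ |sig (2 * c * v₁) - sig (2 * u * v₁)| := le_abs_self _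
    have h2 : 0 ≤ |sig (-2 * α * c * v₂) - sig (2 * u * v₂)| := abs_nonneg _
    calc min _ _ ≤ w₁ * (sig (2 * c * v₁) - 1/2) := min_le_left _ _
      _ ≤ w₁ * |sig (2 * c * v₁) - sig (2 * u * v₁)| + w₂ * |sig (-2 * α * c * v₂) - sig (2 * u * v₂)| := by
          nlinarith
  · have h1 : 1/2 ≤ sig (2 * u * v₂) := half_le_sig (by positivity)
    have habs : 1/2 - sig (-2 * α * c * v₂) ≤ |sig (-2 * α * c * v₂) - sig (2 * u * v₂)| := by
      calc 1/2 - sig (-2 * α * c * v₂) ≤ sig (2 * u * v₂) - sig (-2 * α * c * v₂) := by linarith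
        _ ≤ |sig (2 * u * v₂) - sig (-2 * α * c * v₂)| := le_abs_self _
        _ = |sig (-2 * α * c * v₂) - sig (2 * u * v₂)| := abs_sub_comm _ _
    have h2 : 0 ≤ |sig (2 * c * v₁) - sig (2 * u * v₁)| := abs_nonneg _
    calc min _ _ ≤ w₂ * (1/2 - sig (-2 * α * c * v₂)) := min_le_right _ _
      _ ≤ w₁ * |sig (2 * c * v₁) - sig (2 * u * v₁)| + w₂ * |sig (-2 * α * c * v₂) - sig (2 * u * v₂)| := by
          nlinarith
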